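/- Let d ≡ 3 (mod 4) be prime and R_m = (1/d) Σ_{r,s ∈ ℤ_d} τ^{m(r²+s²)} W_{(r,s)}. Then tr(R_m R_{m'}*) = d if m = m' and tr(R_m R_{m'}*) = −1 if m ≠ m' (for 0 ≤ m, m' ≤ d−1). -/

import Mathlib

open Matrix Complex BigOperators
open scoped Kronecker

noncomputable def tauC (d : ℕ) : ℂ := - Complex.exp (Real.pi * Complex.I / d)

/-- `U = diag(e^{2πik/d})`. -/
noncomputable def Umat (d : ℕ) [NeZero d] : Matrix (ZMod d) (ZMod d) ℂ :=
  Matrix.diagonal fun k => Complex.exp (2 * Real.pi * Complex.I * k.val / d)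

/-- `V` the cyclic shift: `V e_r = e_{r+1}`. -/
def Vmat (d : ℕ) [NeZero d] : Matrix (ZMod d) (ZMod d) ℂ :=
  fun i j => if i = j + 1 then 1 else 0

/-- Weyl–Heisenberg matrices `W_{(r,s)} = τ^{rs} V^r U^s`. -/
noncomputable def WH (d : ℕ) [NeZero d] (r s : ZMod d) : Matrix (ZMod d) (ZMod d) ℂ :=
  (tauC d) ^ (r.val * s.val) • ((Vmat d) ^ r.val * (Umat d) ^ s.val)

/-- The SWAP operator on `ℂ^d ⊗ ℂ^d`. -/
def SWAPmat (d : ℕ) [NeZero d] : Matrix (ZMod d × ZMod d) (ZMod d × ZMod d) ℂ :=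
  fun p q => if p.1 = q.2 ∧ p.2 = q.1 then 1 else 0

/-- `R_m = (1/d) Σ_{r,s} τ^{m(r²+s²)} W_{(r,s)}`. -/
noncomputable def Rmat (d : ℕ) [NeZero d] (m : ZMod d) : Matrix (ZMod d) (ZMod d) ℂ :=
  (1 / d : ℂ) • ∑ r : ZMod d, ∑ s : ZMod d,
    (tauC d) ^ (m.val * (r.val ^ 2 + s.val ^ 2)) • WH d r s

/-!
For odd `d` one has `τ = ψ(1/2)` for the standard additive character `ψ` of `ZMod d`, so the
entries of `W_{(r,s)}` and the coefficients of `R_m` are values of `ψ`. Trace orthogonality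
`tr(W_a W_bᴴ) = d δ_{ab}` turns `tr(R_m R_{m'}ᴴ)` into
`d⁻¹ Σ_{r,s} ψ(c r²) ψ(c s²) = G(c)² / d` with `c = (m - m')/2` and `G(c) = Σ_r ψ(c r²)`.
For `c = 0` we get `G = d`. Otherwise `G(c)` is a Gauss sum of the quadratic character `χ`,
so `G(c)² = χ(-1) d`, and `χ(-1) = -1` because `d ≡ 3 mod 4`.
-/

open ZMod

lemma trace_sum_smul_mul_conjTranspose_sum_smul {ι n R : Type*} [Fintype ι] [DecidableEq ι]
    [Fintype n] [CommSemiring R] [StarRing R] (W : ι → Matrix n n R) (c : R)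
    (hW : ∀ a b, trace (W a * (W b)ᴴ) = if a = b then c else 0) (f g : ι → R) :
    trace ((∑ a, f a • W a) * (∑ b, g b • W b)ᴴ) = c * ∑ a, f a * star (g a) := by
  simp only [conjTranspose_sum, conjTranspose_smul, Matrix.sum_mul, Matrix.smul_mul,
    Matrix.mul_smul, trace_sum, trace_smul, hW, smul_eq_mul, mul_ite, mul_zero,
    Finset.sum_ite_eq', Finset.mem_univ, if_true, Finset.mul_sum]
  exact Finset.sum_congr rfl fun a _ => by ring

section QuadraticGaussSum

variable {F R : Type*} [Field F] [Fintype F] [DecidableEq F] [CommRing R] [IsDomain R]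

lemma sum_mul_sq_eq_gaussSum (hF : ringChar F ≠ 2) {ψ : AddChar F R} (hψ : ψ.IsPrimitive)
    {c : F} (hc : c ≠ 0) :
    ∑ x, ψ (c * x ^ 2) =
      gaussSum ((quadraticChar F).ringHomComp (Int.castRingHom R)) (ψ.mulShift c) := by
  have hfiber (a : F) :
      ∑ x ∈ {x | x ^ 2 = a}, ψ (c * x ^ 2) = (quadraticChar F a + 1) * ψ (c * a) := by
    rw [Finset.sum_congr rfl fun x hx => by rw [(Finset.mem_filter.mp hx).2], Finset.sum_const,
      nsmul_eq_mul]
    have hcard := quadraticChar_card_sqrts hF a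
    rw [Set.toFinset_ofPred] at hcard
    exact_mod_cast congrArg (fun n : ℤ => (n : R) * ψ (c * a)) hcard
  have hvanish : ∑ a, ψ (c * a) = 0 := by
    simpa [hc, mul_comm] using AddChar.sum_mulShift c hψ
  rw [← Finset.sum_fiberwise Finset.univ (· ^ 2)]
  simp only [hfiber, add_mul, one_mul, Finset.sum_add_distrib, hvanish, add_zero, gaussSum,
    MulChar.ringHomComp_apply, AddChar.mulShift_apply, eq_intCast]

lemma sq_sum_mul_sq [CharZero R] (hF : ringChar F ≠ 2) {ψ : AddChar F R} (hψ : ψ.IsPrimitive)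
    {c : F} (hc : c ≠ 0) :
    (∑ x, ψ (c * x ^ 2)) ^ 2 = quadraticChar F (-1) * Fintype.card F := by
  have hχ : (quadraticChar F).ringHomComp (Int.castRingHom R) ≠ 1 :=
    (MulChar.ringHomComp_ne_one_iff Int.cast_injective).mpr (quadraticChar_ne_one hF)
  have hψc : (ψ.mulShift c).IsPrimitive := fun a ha => by
    rw [AddChar.mulShift_mulShift]
    exact hψ (mul_ne_zero hc ha)
  rw [sum_mul_sq_eq_gaussSum hF hψ hc,
    gaussSum_sq hχ ((quadraticChar_isQuadratic F).comp _) hψc]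
  simp

end QuadraticGaussSum

lemma ZMod.star_stdAddChar {d : ℕ} [NeZero d] (x : ZMod d) :
    star (stdAddChar x) = stdAddChar (-x) := by
  rw [← AddChar.inv_apply,
    ← AddChar.starComp_apply (by simp [ZMod.ringChar_zmod_n, Nat.pos_of_neZero])]
  rfl

lemma ZMod.inv_two_eq_of_odd {d : ℕ} (hd : Odd d) : (2 : ZMod d)⁻¹ = ((d + 1) / 2 : ℕ) := by
  apply ZMod.inv_eq_of_mul_eq_one
  obtain ⟨k, rfl⟩ := hd
  rw [show (2 * k + 1 + 1) / 2 = k + 1 by omega]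
  have h := ZMod.natCast_self (2 * k + 1)
  push_cast at h ⊢
  linear_combination h

lemma sq_sum_stdAddChar_mul_sq {d : ℕ} [Fact d.Prime] (hd : d % 4 = 3) {c : ZMod d}
    (hc : c ≠ 0) : (∑ x : ZMod d, stdAddChar (c * x ^ 2)) ^ 2 = -(d : ℂ) := by
  have hF : ringChar (ZMod d) ≠ 2 := by rw [ZMod.ringChar_zmod_n]; omega
  rw [sq_sum_mul_sq hF (isPrimitive_stdAddChar d) hc, quadraticChar_neg_one hF, ZMod.card,
    χ₄_nat_three_mod_four hd]
  simp

section WeylHeisenberg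

variable {d : ℕ} [NeZero d]

lemma tauC_eq_stdAddChar (hd : Odd d) : tauC d = stdAddChar (2⁻¹ : ZMod d) := by
  rw [inv_two_eq_of_odd hd, stdAddChar_apply, toCircle_natCast, tauC]
  obtain ⟨k, rfl⟩ := hd
  rw [show (2 * k + 1 + 1) / 2 = k + 1 by omega]
  have h : (((2 * k + 1 : ℕ) : ℂ)) ≠ 0 := by exact_mod_cast (by omega : 2 * k + 1 ≠ 0)
  rw [← neg_one_mul, ← Complex.exp_pi_mul_I, ← Complex.exp_add]
  congr 1
  field_simp
  push_cast
  ring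

lemma tauC_pow (hd : Odd d) (n : ℕ) : tauC d ^ n = stdAddChar (2⁻¹ * n : ZMod d) := by
  rw [tauC_eq_stdAddChar hd, ← AddChar.map_nsmul_eq_pow, nsmul_eq_mul, mul_comm]

lemma Umat_eq_diagonal : Umat d = diagonal fun k => stdAddChar k := by
  ext i j
  simp [Umat, diagonal, stdAddChar_apply, toCircle_apply]

lemma Vmat_pow_apply (n : ℕ) (i j : ZMod d) :
    (Vmat d ^ n) i j = if i = j + n then 1 else 0 := by
  induction n generalizing j with
  | zero => simp [one_apply]
  | succ n ih =>
    simp [pow_succ, mul_apply, Vmat, ih, add_assoc, add_comm (1 : ZMod d)]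

lemma WH_apply (hd : Odd d) (r s i j : ZMod d) :
    WH d r s i j = if i = j + r then stdAddChar (2⁻¹ * r * s + j * s) else 0 := by
  rw [WH, Umat_eq_diagonal, diagonal_pow, Matrix.smul_apply, mul_diagonal, Vmat_pow_apply,
    tauC_pow hd, Pi.pow_apply, ← AddChar.map_nsmul_eq_pow, natCast_zmod_val]
  split_ifs
  · rw [smul_eq_mul, one_mul, ← AddChar.map_add_eq_mul]
    push_cast [natCast_zmod_val, nsmul_eq_mul]
    ring_nf
  · simp

lemma trace_WH_mul_conjTranspose (hd : Odd d) (r s r' s' : ZMod d) :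
    trace (WH d r s * (WH d r' s')ᴴ) = if (r, s) = (r', s') then (d : ℂ) else 0 := by
  simp only [trace, diag, mul_apply, conjTranspose_apply, WH_apply hd]
  rw [Finset.sum_comm]
  by_cases hr : r = r'
  · subst hr
    have hrow (j : ZMod d) :
        (∑ i : ZMod d, (if i = j + r then stdAddChar (2⁻¹ * r * s + j * s) else 0) *
          star (if i = j + r then stdAddChar (2⁻¹ * r * s' + j * s') else 0)) =
        stdAddChar (2⁻¹ * r * (s - s')) * stdAddChar (j * (s - s')) := by
      simp only [ite_mul, zero_mul, Finset.sum_ite_eq', Finset.mem_univ, if_true, star_stdAddChar,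
        ← AddChar.map_add_eq_mul]
      ring_nf
    simp only [hrow, ← Finset.mul_sum, AddChar.sum_mulShift _ (isPrimitive_stdAddChar d),
      sub_eq_zero, ZMod.card, Prod.mk.injEq, true_and]
    split_ifs with h <;> simp [h]
  · rw [if_neg (by simp [hr])]
    refine Finset.sum_eq_zero fun j _ => Finset.sum_eq_zero fun i _ => ?_
    split_ifs with h1 h2 <;> simp_all

lemma Rmat_eq_sum (hd : Odd d) (m : ZMod d) :
    Rmat d m = (1 / d : ℂ) •
      ∑ p : ZMod d × ZMod d, stdAddChar (2⁻¹ * m * (p.1 ^ 2 + p.2 ^ 2)) • WH d p.1 p.2 := by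
  rw [Rmat, Fintype.sum_prod_type]
  refine congrArg _ (Finset.sum_congr rfl fun r _ => Finset.sum_congr rfl fun s _ => ?_)
  rw [tauC_pow hd]
  push_cast [natCast_zmod_val]
  ring_nf

lemma trace_Rmat_mul_conjTranspose (hd : Odd d) (m m' : ZMod d) :
    trace (Rmat d m * (Rmat d m')ᴴ) = (∑ x, stdAddChar (2⁻¹ * (m - m') * x ^ 2)) ^ 2 / d := by
  have hW (p q : ZMod d × ZMod d) :
      trace (WH d p.1 p.2 * (WH d q.1 q.2)ᴴ) = if p = q then (d : ℂ) else 0 :=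
    trace_WH_mul_conjTranspose hd p.1 p.2 q.1 q.2
  rw [Rmat_eq_sum hd, Rmat_eq_sum hd, conjTranspose_smul, Matrix.smul_mul, Matrix.mul_smul,
    trace_smul, trace_smul, trace_sum_smul_mul_conjTranspose_sum_smul _ _ hW,
    sq, Finset.sum_mul_sum, ← Fintype.sum_prod_type']
  simp only [star_stdAddChar, ← AddChar.map_add_eq_mul, smul_eq_mul, star_div₀, star_one,
    star_natCast]
  have hd0 : (d : ℂ) ≠ 0 := NeZero.ne _
  field_simp
  congr! 2 with p
  ring

end WeylHeisenberg

theorem Rmat_trace_products (d : ℕ) [Fact d.Prime] [NeZero d] (hd : d % 4 = 3)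
    (m m' : ZMod d) :
    Matrix.trace (Rmat d m * (Rmat d m')ᴴ) = if m = m' then (d : ℂ) else -1 := by
  have hodd : Odd d := Nat.odd_iff.mpr (by omega)
  have hd0 : (d : ℂ) ≠ 0 := NeZero.ne _
  rw [trace_Rmat_mul_conjTranspose hodd]
  split_ifs with h
  · simp [h, sq, hd0]
  · have h2 : (2 : ZMod d) ≠ 0 := Ring.two_ne_zero (by rw [ZMod.ringChar_zmod_n]; omega)
    rw [sq_sum_stdAddChar_mul_sq hd (mul_ne_zero (inv_ne_zero h2) (sub_ne_zero.mpr h))]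
    field_simp
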